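/- Workspace Lemma: Given a finite relational vocabulary, a structure (A,ā) and q > 0, there is a structure B (finite if A is finite, with |B| ≤ 2q|A|) such that (A + B, ā) ≡_q (A_k + B, ā), where k = 2^q and A_k is the induced substructure on the Gaifman ball of radius k around ā, and ≡_q is elementary equivalence up to quantifier rank q. -/

import Mathlib

/-- A relational structure over vocabulary `R` (arities `ar`) with `m` distinguished
constants (the parameter tuple `ā`). -/
structure Str (R : Type) (ar : R → ℕ) (m : ℕ) where
  W : Type
  rel : ∀ r : R, (Fin (ar r) → W) → Prop
  c : Fin m → W

variable {R : Type} {ar : R → ℕ} {m : ℕ}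

/-- Terms: constants or variables. -/
abbrev Tm (m n : ℕ) : Type := Fin m ⊕ Fin n

/-- Evaluation of terms. -/
def tmEval (A : Str R ar m) {n : ℕ} (v : Fin n → A.W) : Tm m n → A.W :=
  Sum.elim A.c v

/-- Gaifman adjacency: distinct elements co-occurring in a tuple of some relation. -/
def adj (A : Str R ar m) (x y : A.W) : Prop :=
  x ≠ y ∧ ∃ r t, A.rel r t ∧ (∃ i, t i = x) ∧ (∃ j, t j = y)

/-- Gaifman-graph distance is at most `n`. -/
inductive distLE (A : Str R ar m) : A.W → A.W → ℕ → Prop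
  | refl (x : A.W) (n : ℕ) : distLE A x x n
  | step {x y z : A.W} {n : ℕ} : adj A x y → distLE A y z n → distLE A x z (n + 1)

/-- The closed Gaifman ball of radius `k` around the constants. -/
def ballSet (A : Str R ar m) (k : ℕ) : Set A.W :=
  {w | ∃ i : Fin m, distLE A (A.c i) w k}

theorem c_mem_ballSet (A : Str R ar m) (k : ℕ) (i : Fin m) :
    A.c i ∈ ballSet A k := ⟨i, distLE.refl _ _⟩

/-- `Sk(A,ā)`: the induced substructure on the closed Gaifman ball of radius `k`
around the distinguished tuple. -/
def SkStr (A : Str R ar m) (k : ℕ) : Str R ar m where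
  W := {w : A.W // w ∈ ballSet A k}
  rel r t := A.rel r fun i => (t i).1
  c i := ⟨A.c i, c_mem_ballSet A k i⟩

/-- First-order formulas with equality, with `n` free variables. -/
inductive FO (R : Type) (ar : R → ℕ) (m : ℕ) : ℕ → Type
  | rel {n : ℕ} (r : R) (t : Fin (ar r) → Tm m n) : FO R ar m n
  | eq {n : ℕ} (t u : Tm m n) : FO R ar m n
  | not {n : ℕ} (φ : FO R ar m n) : FO R ar m n
  | and {n : ℕ} (φ ψ : FO R ar m n) : FO R ar m n
  | or {n : ℕ} (φ ψ : FO R ar m n) : FO R ar m n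
  | ex {n : ℕ} (φ : FO R ar m (n + 1)) : FO R ar m n
  | all {n : ℕ} (φ : FO R ar m (n + 1)) : FO R ar m n

/-- Tarskian satisfaction. -/
def FO.Sat (A : Str R ar m) : ∀ {n : ℕ}, FO R ar m n → (Fin n → A.W) → Prop
  | _, .rel r t, v => A.rel r fun i => tmEval A v (t i)
  | _, .eq t u, v => tmEval A v t = tmEval A v u
  | _, .not φ, v => ¬ FO.Sat A φ v
  | _, .and φ ψ, v => FO.Sat A φ v ∧ FO.Sat A ψ v
  | _, .or φ ψ, v => FO.Sat A φ v ∨ FO.Sat A ψ v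
  | _, .ex φ, v => ∃ w : A.W, FO.Sat A φ (Fin.snoc v w)
  | _, .all φ, v => ∀ w : A.W, FO.Sat A φ (Fin.snoc v w)

/-- Quantifier rank. -/
def FO.qr : ∀ {n : ℕ}, FO R ar m n → ℕ
  | _, .rel _ _ => 0
  | _, .eq _ _ => 0
  | _, .not φ => φ.qr
  | _, .and φ ψ => max φ.qr ψ.qr
  | _, .or φ ψ => max φ.qr ψ.qr
  | _, .ex φ => φ.qr + 1
  | _, .all φ => φ.qr + 1

/-- Satisfaction of a sentence (a formula whose free variables are the parameters). -/
def FO.SatS (A : Str R ar m) (φ : FO R ar m 0) : Prop :=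
  FO.Sat A φ (fun i => i.elim0)

/-- Disjoint union `A + B` of structures, with the distinguished constants living
in the `A`-component. -/
def sumStr (A : Str R ar m) (B : Str R ar 0) : Str R ar m where
  W := A.W ⊕ B.W
  rel r t :=
    (∃ ta : Fin (ar r) → A.W, (∀ i, t i = Sum.inl (ta i)) ∧ A.rel r ta) ∨
    (∃ tb : Fin (ar r) → B.W, (∀ i, t i = Sum.inr (tb i)) ∧ B.rel r tb)
  c i := Sum.inl (A.c i)

/-!
Both `A + B` and `A_k + B` are disjoint unions of induced substructures of `A`: a main
component holding the constants (`A`, resp. `A_k`), `q` copies of `A` and `q` copies of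
`A_k`; so each element is labelled by its component and the element of `A` it copies.
Duplicator keeps the second coordinates of the labels of paired pebbles equal and, with
`j` rounds left, keeps "in the same component" equivalent on both sides for pebbles within
distance `2^j`. A move within `2^j` of a pebble is answered in that pebble's partner
component, a move far from all pebbles in a fresh copy of the same type; in `q` rounds
fresh copies never run out. The main components are the only ones whose types differ, and
pebbles paired main-to-main arise only from chains of near moves starting at the
constants, so they stay within `2^q` of `ā`, i.e. inside `A_k`.
-/

open Function Set

theorem adj.symm {A : Str R ar m} {x y : A.W} (h : adj A x y) : adj A y x :=
  ⟨h.1.symm, h.2.imp fun _ ⟨t, hr, hx, hy⟩ => ⟨t, hr, hy, hx⟩⟩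

namespace distLE

variable {A : Str R ar m} {x y z : A.W}

theorem mono {a b : ℕ} (h : distLE A x y a) (hab : a ≤ b) : distLE A x y b := by
  induction h generalizing b with
  | refl => exact .refl _ _
  | step hxy _ ih =>
    obtain ⟨b, rfl⟩ := Nat.exists_eq_add_of_lt hab
    exact .step hxy (ih (by omega))

theorem trans {a b : ℕ} (h₁ : distLE A x y a) (h₂ : distLE A y z b) :
    distLE A x z (a + b) := by
  induction h₁ with
  | refl => exact h₂.mono (Nat.le_add_left _ _)
  | step hxy _ ih => exact (step hxy (ih h₂)).mono (by omega)

theorem symm {a : ℕ} (h : distLE A x y a) : distLE A y x a := by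
  induction h with
  | refl => exact .refl _ _
  | step hxy _ ih => exact ih.trans (step hxy.symm (.refl _ 0))

theorem of_rel {r : R} {t : Fin (ar r) → A.W} (h : A.rel r t) (i j : Fin (ar r)) :
    distLE A (t i) (t j) 1 := by
  by_cases hij : t i = t j
  · rw [hij]; exact .refl _ _
  · exact .step ⟨hij, r, t, h, ⟨i, rfl⟩, ⟨j, rfl⟩⟩ (.refl _ 0)

end distLE

theorem exists_forall_ne_of_lt {β : Type*} {n k : ℕ} (hnk : n < k) (g : Fin n → β)
    {f : Fin k → β} (hf : Injective f) : ∃ s, ∀ i, g i ≠ f s := by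
  by_contra! h
  choose σ hσ using h
  exact hnk.not_ge (Fin.le_of_injective σ fun s s' hss => hf (by rw [← hσ, ← hσ, hss]))

/-- `none` is the last variable. -/
def Tm.unsnoc {n : ℕ} : Tm m (n + 1) → Option (Tm m n)
  | .inl i => some (.inl i)
  | .inr i => Fin.lastCases none (fun j => some (.inr j)) i

theorem comp_tmEval_snoc {β : Type*} (M : Str R ar m) (g : M.W → β) {n : ℕ}
    (v : Fin n → M.W) (x : M.W) :
    g ∘ tmEval M (Fin.snoc v x) = (fun o => Option.elim o (g x) (g ∘ tmEval M v)) ∘ Tm.unsnoc := by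
  funext t
  rcases t with i | i
  · rfl
  · induction i using Fin.lastCases <;>
      simp [Tm.unsnoc, tmEval, Fin.snoc_last, Fin.snoc_castSucc]

theorem FO.sat_iff_of_backAndForth {M N : Str R ar m}
    (I : ∀ n : ℕ, ℕ → (Fin n → M.W) → (Fin n → N.W) → Prop)
    (eq_iff : ∀ n j v w, I n j v w → ∀ t u : Tm m n,
      (tmEval M v t = tmEval M v u ↔ tmEval N w t = tmEval N w u))
    (rel_iff : ∀ n j v w, I n j v w → ∀ (r : R) (t : Fin (ar r) → Tm m n),
      (M.rel r (fun i => tmEval M v (t i)) ↔ N.rel r (fun i => tmEval N w (t i))))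
    (forth : ∀ n j v w, I n (j + 1) v w → ∀ x, ∃ y, I (n + 1) j (Fin.snoc v x) (Fin.snoc w y))
    (back : ∀ n j v w, I n (j + 1) v w → ∀ y, ∃ x, I (n + 1) j (Fin.snoc v x) (Fin.snoc w y))
    {n : ℕ} (φ : FO R ar m n) (j : ℕ) (v : Fin n → M.W) (w : Fin n → N.W)
    (hφ : φ.qr ≤ j) (hI : I n j v w) : FO.Sat M φ v ↔ FO.Sat N φ w := by
  induction φ generalizing j with
  | rel r t => exact rel_iff _ j v w hI r t
  | eq t u => exact eq_iff _ j v w hI t u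
  | not φ ih => exact not_congr (ih j v w hφ hI)
  | and φ ψ ihφ ihψ =>
    rw [FO.qr, max_le_iff] at hφ
    exact and_congr (ihφ j v w hφ.1 hI) (ihψ j v w hφ.2 hI)
  | or φ ψ ihφ ihψ =>
    rw [FO.qr, max_le_iff] at hφ
    exact or_congr (ihφ j v w hφ.1 hI) (ihψ j v w hφ.2 hI)
  | ex φ ih =>
    obtain ⟨j, rfl⟩ := Nat.exists_eq_add_of_lt hφ
    constructor
    · rintro ⟨x, hx⟩
      obtain ⟨y, hy⟩ := forth _ _ _ _ hI x
      exact ⟨y, (ih _ _ _ (Nat.le_add_right _ _) hy).1 hx⟩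
    · rintro ⟨y, hy⟩
      obtain ⟨x, hx⟩ := back _ _ _ _ hI y
      exact ⟨x, (ih _ _ _ (Nat.le_add_right _ _) hx).2 hy⟩
  | all φ ih =>
    obtain ⟨j, rfl⟩ := Nat.exists_eq_add_of_lt hφ
    constructor
    · intro h y
      obtain ⟨x, hx⟩ := back _ _ _ _ hI y
      exact (ih _ _ _ (Nat.le_add_right _ _) hx).1 (h x)
    · intro h x
      obtain ⟨y, hy⟩ := forth _ _ _ _ hI x
      exact (ih _ _ _ (Nat.le_add_right _ _) hy).2 (h y)

def unionOfInduced (A : Str R ar m) {ι : Type} (D : ι → Set A.W) : Str R ar 0 where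
  W := {x : ι × A.W // x.2 ∈ D x.1}
  rel r t := (∀ i i', (t i).1.1 = (t i').1.1) ∧ A.rel r fun i => (t i).1.2
  c := Fin.elim0

theorem card_unionOfInduced_le (A : Str R ar m) {ι : Type} [Finite ι] [Finite A.W]
    (D : ι → Set A.W) : Nat.card (unionOfInduced A D).W ≤ Nat.card ι * Nat.card A.W :=
  (Finite.card_subtype_le _).trans_eq (Nat.card_prod _ _)

structure IsUnionOfInduced {κ : Type} (A : Str R ar m) (D : κ → Set A.W) (c₀ : κ)
    (M : Str R ar m) (label : M.W → κ × A.W) : Prop where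
  injective : Injective label
  mem_range_iff : ∀ x, x ∈ range label ↔ x.2 ∈ D x.1
  rel_iff : ∀ r t, M.rel r t ↔
    (∀ i i', (label (t i)).1 = (label (t i')).1) ∧ A.rel r fun i => (label (t i)).2
  label_c : ∀ i, label (M.c i) = (c₀, A.c i)

theorem IsUnionOfInduced.label_tmEval_elim0 {κ : Type} {A : Str R ar m} {D : κ → Set A.W}
    {c₀ : κ} {M : Str R ar m} {label : M.W → κ × A.W} (hM : IsUnionOfInduced A D c₀ M label)
    (p : Tm m 0) : label (tmEval M (fun i => i.elim0) p) = (c₀, A.c (p.elim id Fin.elim0)) := by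
  rcases p with i | i
  exacts [hM.label_c i, i.elim0]

theorem isUnionOfInduced_sumStr (A : Str R ar m) {ι : Type} {A' : Str R ar m}
    (D : Option ι → Set A.W) (f : A'.W → A.W) (hf : Injective f) (hrange : range f = D none)
    (hrel : ∀ r t, A'.rel r t ↔ A.rel r (f ∘ t)) (hc : ∀ i, f (A'.c i) = A.c i) :
    IsUnionOfInduced A D none (sumStr A' (unionOfInduced A fun i => D (some i)))
      (Sum.elim (fun a => (none, f a)) fun x => (some x.1.1, x.1.2)) where
  injective := by
    rintro (a | x) (b | y) h <;> simp at h
    · rw [hf h]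
    · exact congrArg _ (Subtype.ext (Prod.ext h.1 h.2))
  mem_range_iff := by
    rintro ⟨_ | i, a⟩
    · simp [← hrange, sumStr, eq_comm]
    · refine ⟨?_, fun ha => ⟨.inr ⟨(i, a), ha⟩, rfl⟩⟩
      rintro ⟨b | ⟨⟨i', b⟩, hb⟩, h⟩ <;> simp at h
      obtain ⟨rfl, rfl⟩ := h
      exact hb
  rel_iff r t := by
    constructor
    · rintro (⟨ta, hta, h⟩ | ⟨tb, htb, h⟩)
      · obtain rfl : t = fun i => .inl (ta i) := funext hta
        exact ⟨fun _ _ => rfl, (hrel r ta).1 h⟩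
      · obtain rfl : t = fun i => .inr (tb i) := funext htb
        exact ⟨fun i i' => congrArg some (h.1 i i'), h.2⟩
    · rintro ⟨hfst, h⟩
      by_cases hinr : ∃ i₀ x₀, t i₀ = .inr x₀
      · obtain ⟨i₀, x₀, h₀⟩ := hinr
        have : ∀ i, ∃ x, t i = .inr x := fun i => by
          rcases hi : t i with a | x
          · simpa [hi, h₀] using hfst i₀ i
          · exact ⟨x, rfl⟩
        choose tb htb using this
        obtain rfl : t = fun i => .inr (tb i) := funext htb
        exact .inr ⟨tb, fun _ => rfl, fun i i' => Option.some_inj.1 (hfst i i'), h⟩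
      · have : ∀ i, ∃ a, t i = .inl a := fun i => by
          rcases hi : t i with a | x
          · exact ⟨a, rfl⟩
          · exact absurd ⟨i, x, hi⟩ hinr
        choose ta hta using this
        obtain rfl : t = fun i => .inl (ta i) := funext hta
        exact .inl ⟨ta, fun _ => rfl, (hrel r ta).2 h⟩
  label_c i := by simp [sumStr, hc]

section Game

variable (A : Str R ar m) (q : ℕ)

def copyDomain (b : Bool) : Set A.W := bif b then ballSet A (2 ^ q) else univ

theorem ballSet_subset_copyDomain (b : Bool) : ballSet A (2 ^ q) ⊆ copyDomain A q b := by
  cases b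
  exacts [subset_univ _, subset_rfl]

abbrev workspace : Str R ar 0 := unionOfInduced A fun i : Fin q × Bool => copyDomain A q i.2

/-- Components are `none`, the main one, and `some (s, b)`, the `s`-th copy of type `b`. -/
abbrev Component (q : ℕ) : Type := Option (Fin q × Bool)

def kindOf {q : ℕ} (b₀ : Bool) (c : Component q) : Bool := c.elim b₀ Prod.snd

def componentDomain (b₀ : Bool) (c : Component q) : Set A.W := copyDomain A q (kindOf b₀ c)

def NearConst (j : ℕ) (a : A.W) : Prop := ∃ i d, distLE A (A.c i) a d ∧ d + 2 ^ j ≤ 2 ^ q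

variable {A q}

theorem NearConst.mono {j j' : ℕ} {a : A.W} (h : NearConst A q j' a) (hj : j ≤ j') :
    NearConst A q j a :=
  let ⟨i, d, hd, hdq⟩ := h
  ⟨i, d, hd, le_trans (Nat.add_le_add_left (Nat.pow_le_pow_right two_pos hj) d) hdq⟩

theorem NearConst.step {j : ℕ} {a b : A.W} (h : NearConst A q (j + 1) a)
    (hab : distLE A a b (2 ^ j)) : NearConst A q j b :=
  let ⟨i, d, hd, hdq⟩ := h
  ⟨i, d + 2 ^ j, hd.trans hab, by rw [pow_succ] at hdq; omega⟩

theorem NearConst.mem_ballSet {j : ℕ} {a : A.W} (h : NearConst A q j a) :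
    a ∈ ballSet A (2 ^ q) :=
  let ⟨i, d, hd, hdq⟩ := h
  ⟨i, hd.mono ((Nat.le_add_right d _).trans hdq)⟩

variable (A q) in
/-- Duplicator's invariant with `j` rounds left, between two labellings `e`, `e'` of the
pebbles (constants included) by component and element of `A`. -/
structure Matched (b₀ b₀' : Bool) (j : ℕ) {P : Type} (e e' : P → Component q × A.W) :
    Prop where
  snd_eq : ∀ p, (e p).2 = (e' p).2
  fst_eq_iff : ∀ p p', distLE A (e p).2 (e p').2 (2 ^ j) →
    ((e p).1 = (e p').1 ↔ (e' p).1 = (e' p').1)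
  kind : ∀ p, kindOf b₀ (e p).1 = kindOf b₀' (e' p).1 ∨
    (e p).1 = none ∧ (e' p).1 = none ∧ NearConst A q j (e p).2

namespace Matched

variable {b₀ b₀' : Bool} {j : ℕ} {P : Type} {e e' : P → Component q × A.W}

theorem symm (h : Matched A q b₀ b₀' j e e') : Matched A q b₀' b₀ j e' e where
  snd_eq p := (h.snd_eq p).symm
  fst_eq_iff p p' hd := (h.fst_eq_iff p p' (by rwa [h.snd_eq, h.snd_eq])).symm
  kind p := (h.kind p).imp Eq.symm fun ⟨h₁, h₂, h₃⟩ => ⟨h₂, h₁, h.snd_eq p ▸ h₃⟩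

theorem comp (h : Matched A q b₀ b₀' j e e') {Q : Type} (f : Q → P) :
    Matched A q b₀ b₀' j (e ∘ f) (e' ∘ f) :=
  ⟨fun p => h.snd_eq (f p), fun p p' => h.fst_eq_iff (f p) (f p'), fun p => h.kind (f p)⟩

theorem eq_iff (h : Matched A q b₀ b₀' j e e') (p p' : P) : e p = e p' ↔ e' p = e' p' := by
  rw [Prod.ext_iff, Prod.ext_iff, ← h.snd_eq, ← h.snd_eq]
  exact and_congr_left fun hsnd => h.fst_eq_iff p p' (hsnd ▸ .refl _ _)

theorem fst_pairwise_iff {r : R} {e e' : Fin (ar r) → Component q × A.W}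
    (h : Matched A q b₀ b₀' j e e') (hr : A.rel r fun i => (e i).2) :
    (∀ i i', (e i).1 = (e i').1) ↔ ∀ i i', (e' i).1 = (e' i').1 :=
  forall₂_congr fun i i' =>
    h.fst_eq_iff i i' ((distLE.of_rel hr i i').mono Nat.one_le_two_pow)

theorem extend (h : Matched A q b₀ b₀' (j + 1) e e') {x : Component q × A.W}
    {c' : Component q}
    (hfst : ∀ p, distLE A (e p).2 x.2 (2 ^ j) → ((e p).1 = x.1 ↔ (e' p).1 = c'))
    (hkind : kindOf b₀ x.1 = kindOf b₀' c' ∨ x.1 = none ∧ c' = none ∧ NearConst A q j x.2) :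
    Matched A q b₀ b₀' j (fun o => Option.elim o x e) (fun o => Option.elim o (c', x.2) e') where
  snd_eq := by
    rintro (_ | p)
    · rfl
    · exact h.snd_eq p
  fst_eq_iff := by
    rintro (_ | p) (_ | p') hd
    · exact iff_of_true rfl rfl
    · exact eq_comm.trans ((hfst p' hd.symm).trans eq_comm)
    · exact hfst p hd
    · exact h.fst_eq_iff p p' (hd.mono (Nat.pow_le_pow_right two_pos j.le_succ))
  kind := by
    rintro (_ | p)
    · exact hkind
    · exact (h.kind p).imp_right fun ⟨h₁, h₂, h₃⟩ => ⟨h₁, h₂, h₃.mono j.le_succ⟩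

theorem forth (h : Matched A q b₀ b₀' (j + 1) e e')
    (hfresh : ∀ b, ∃ s, ∀ p, (e' p).1 ≠ some (s, b))
    (x : Component q × A.W) (hx : x.2 ∈ copyDomain A q (kindOf b₀ x.1)) :
    ∃ c', x.2 ∈ copyDomain A q (kindOf b₀' c') ∧
      Matched A q b₀ b₀' j (fun o => Option.elim o x e) (fun o => Option.elim o (c', x.2) e') := by
  by_cases hnear : ∃ p, (e p).1 = x.1 ∧ distLE A (e p).2 x.2 (2 ^ j)
  · obtain ⟨p, hp, hd⟩ := hnear
    have hfst : ∀ p', distLE A (e p').2 x.2 (2 ^ j) →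
        ((e p').1 = x.1 ↔ (e' p').1 = (e' p).1) := fun p' hd' => by
      rw [← hp]
      exact h.fst_eq_iff p' p ((hd'.trans hd.symm).mono (by rw [pow_succ]; omega))
    rcases h.kind p with hk | ⟨hm, hm', hnc⟩
    · rw [← hp, hk] at hx
      exact ⟨_, hx, h.extend hfst (.inl (hp ▸ hk))⟩
    · exact ⟨_, ballSet_subset_copyDomain A q _ (hnc.step hd).mem_ballSet,
        h.extend hfst (.inr ⟨hp ▸ hm, hm', hnc.step hd⟩)⟩
  · simp only [not_exists, not_and] at hnear
    obtain ⟨s, hs⟩ := hfresh (kindOf b₀ x.1)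
    exact ⟨some (s, kindOf b₀ x.1), hx,
      h.extend (fun p hd => iff_of_false (fun hp => hnear p hp hd) (hs p)) (.inl rfl)⟩

end Matched


variable {M N : Str R ar m} {b₀ b₀' : Bool}
  {lM : M.W → Component q × A.W} {lN : N.W → Component q × A.W}

theorem exists_matched_snoc
    (hM : IsUnionOfInduced A (componentDomain A q b₀) none M lM)
    (hN : IsUnionOfInduced A (componentDomain A q b₀') none N lN)
    {n j : ℕ} (hnj : n + (j + 1) ≤ q) {v : Fin n → M.W} {w : Fin n → N.W}
    (h : Matched A q b₀ b₀' (j + 1) (lM ∘ tmEval M v) (lN ∘ tmEval N w)) (x : M.W) :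
    ∃ y, Matched A q b₀ b₀' j (lM ∘ tmEval M (Fin.snoc v x)) (lN ∘ tmEval N (Fin.snoc w y)) := by
  have hfresh : ∀ b, ∃ s, ∀ p, (lN (tmEval N w p)).1 ≠ some (s, b) := fun b => by
    obtain ⟨s, hs⟩ := exists_forall_ne_of_lt (by omega) (fun i => (lN (w i)).1)
      (f := fun s => some (s, b)) fun s s' hss => by simpa using hss
    refine ⟨s, ?_⟩
    rintro (i | i)
    · simp [tmEval, hN.label_c]
    · exact hs i
  obtain ⟨c', hc', h'⟩ := h.forth hfresh (lM x) ((hM.mem_range_iff _).1 ⟨x, rfl⟩)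
  obtain ⟨y, hy⟩ := (hN.mem_range_iff (c', (lM x).2)).2 hc'
  refine ⟨y, ?_⟩
  rw [comp_tmEval_snoc, comp_tmEval_snoc, hy]
  exact h'.comp _

theorem matched_sentence
    (hM : IsUnionOfInduced A (componentDomain A q b₀) none M lM)
    (hN : IsUnionOfInduced A (componentDomain A q b₀') none N lN) :
    Matched A q b₀ b₀' q (lM ∘ tmEval M fun i => i.elim0) (lN ∘ tmEval N fun i => i.elim0) := by
  rw [show lM ∘ _ = _ from funext hM.label_tmEval_elim0,
    show lN ∘ _ = _ from funext hN.label_tmEval_elim0]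
  exact ⟨fun _ => rfl, fun _ _ _ => iff_of_true rfl rfl,
    fun _ => .inr ⟨rfl, rfl, _, 0, .refl _ _, by omega⟩⟩

theorem sat_iff_of_matched
    (hM : IsUnionOfInduced A (componentDomain A q b₀) none M lM)
    (hN : IsUnionOfInduced A (componentDomain A q b₀') none N lN)
    {n : ℕ} (φ : FO R ar m n) (j : ℕ) (v : Fin n → M.W) (w : Fin n → N.W)
    (hφ : φ.qr ≤ j) (hnj : n + j ≤ q)
    (h : Matched A q b₀ b₀' j (lM ∘ tmEval M v) (lN ∘ tmEval N w)) :
    FO.Sat M φ v ↔ FO.Sat N φ w := by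
  refine FO.sat_iff_of_backAndForth
    (fun n j v w => n + j ≤ q ∧ Matched A q b₀ b₀' j (lM ∘ tmEval M v) (lN ∘ tmEval N w))
    ?_ ?_ ?_ ?_ φ j v w hφ ⟨hnj, h⟩
  · rintro n j v w ⟨-, h⟩ t u
    rw [← hM.injective.eq_iff, ← hN.injective.eq_iff]
    exact h.eq_iff t u
  · rintro n j v w ⟨-, h⟩ r t
    have hsnd : (fun i => (lM (tmEval M v (t i))).2) = fun i => (lN (tmEval N w (t i))).2 :=
      funext fun i => h.snd_eq (t i)
    rw [hM.rel_iff, hN.rel_iff, ← hsnd]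
    exact and_congr_left fun hr => (h.comp t).fst_pairwise_iff hr
  · rintro n j v w ⟨hnj, h⟩ x
    obtain ⟨y, hy⟩ := exists_matched_snoc hM hN hnj h x
    exact ⟨y, by omega, hy⟩
  · rintro n j v w ⟨hnj, h⟩ y
    obtain ⟨x, hx⟩ := exists_matched_snoc hN hM hnj h.symm y
    exact ⟨x, by omega, hx.symm⟩

end Game

theorem workspace_lemma_general (A : Str R ar m) (q : ℕ) :
    ∃ B : Str R ar 0,
      (Finite A.W → Finite B.W ∧ Nat.card B.W ≤ 2 * q * Nat.card A.W) ∧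
      ∀ φ : FO R ar m 0, φ.qr ≤ q →
        (FO.SatS (sumStr A B) φ ↔ FO.SatS (sumStr (SkStr A (2 ^ q)) B) φ) := by
  refine ⟨workspace A q, fun _ => ⟨Subtype.finite, ?_⟩, fun φ hφ => ?_⟩
  · simpa [Nat.card_prod, mul_comm q 2] using
      card_unionOfInduced_le A fun i : Fin q × Bool => copyDomain A q i.2
  · have hA := isUnionOfInduced_sumStr A (A' := A) (componentDomain A q false) id
      injective_id range_id (fun _ _ => Iff.rfl) fun _ => rfl
    have hK := isUnionOfInduced_sumStr A (A' := SkStr A (2 ^ q)) (componentDomain A q true)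
      Subtype.val Subtype.val_injective Subtype.range_coe (fun _ _ => Iff.rfl) fun _ => rfl
    exact sat_iff_of_matched hA hK φ q _ _ hφ (Nat.zero_add q).le (matched_sentence hA hK)

/-- Workspace Lemma: given a finite relational vocabulary, a structure `(A,ā)` and
`q > 0`, there is a structure `B` — finite with `|B| ≤ 2q·|A|` whenever `A` is
finite — such that `(A + B, ā) ≡_q (A_k + B, ā)`, where `k = 2^q`, `A_k` is the
induced substructure on the Gaifman ball of radius `k` around `ā`, and `≡_q` is
elementary equivalence up to quantifier rank `q`. -/
theorem workspace_lemma [Fintype R] (A : Str R ar m) (q : ℕ) (hq : 0 < q) :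
    ∃ B : Str R ar 0,
      (Finite A.W → Finite B.W ∧ Nat.card B.W ≤ 2 * q * Nat.card A.W) ∧
      ∀ φ : FO R ar m 0, φ.qr ≤ q →
        (FO.SatS (sumStr A B) φ ↔ FO.SatS (sumStr (SkStr A (2 ^ q)) B) φ) :=
  workspace_lemma_general A q
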